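/- arXiv:1408.4088 — 6 statements merged into one kernel-verified Lean document; each statement's English description precedes it below -/
import Mathlib

section
/- Let h³ = [[1,0],[0,-1]] and h⁴ = [[0,1],[1,0]]. For A ∈ GL(2,ℝ), the span of (Aᵀh³A, Aᵀh⁴A) equals the span of (h³, h⁴) (i.e., the space of trace-free symmetric 2×2 matrices) if and only if A = λA₀ for some λ ≠ 0 and A₀ ∈ O(2,ℝ). -/
/-!
The plane is the space of trace-free symmetric matrices. Congruence `M ↦ AᵀMA` preserves symmetry
and `tr (AᵀMA) = tr (AAᵀM)`, so it maps the plane into itself exactly when `AAᵀ` is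
trace-orthogonal to the plane, i.e. when `AAᵀ = c • 1`; if `A ≠ 0` then `c > 0` and `A / √c` is
orthogonal. Conversely, if `AAᵀ = AᵀA = c • 1` with `c ≠ 0`, congruence by `Aᵀ` undoes congruence
by `A` up to the factor `c²`, which gives the reverse inclusion.
-/

open Matrix

namespace Matrix

variable {n R : Type*} [Fintype n] [CommRing R]

def congruence (A : Matrix n n R) : Matrix n n R →ₗ[R] Matrix n n R :=
  LinearMap.mulLeft R Aᵀ ∘ₗ LinearMap.mulRight R A

@[simp]
theorem congruence_apply (A M : Matrix n n R) : congruence A M = Aᵀ * M * A :=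
  (Matrix.mul_assoc _ _ _).symm

def tracelessSymmetric : Submodule R (Matrix n n R) where
  carrier := {M | Mᵀ = M ∧ M.trace = 0}
  add_mem' := by
    rintro M N ⟨hM, hM'⟩ ⟨hN, hN'⟩
    exact ⟨by rw [transpose_add, hM, hN], by rw [trace_add, hM', hN', add_zero]⟩
  zero_mem' := ⟨transpose_zero, trace_zero n R⟩
  smul_mem' := by
    rintro c M ⟨hM, hM'⟩
    exact ⟨by rw [transpose_smul, hM], by rw [trace_smul, hM', smul_zero]⟩

theorem trace_congruence (A M : Matrix n n R) :
    (congruence A M).trace = (A * Aᵀ * M).trace := by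
  rw [congruence_apply, trace_mul_comm, ← Matrix.mul_assoc]

variable [DecidableEq n]

theorem congruence_mem_tracelessSymmetric {A M : Matrix n n R} {c : R} (h : A * Aᵀ = c • 1)
    (hM : M ∈ tracelessSymmetric) : congruence A M ∈ tracelessSymmetric := by
  obtain ⟨hM, hM'⟩ := hM
  refine ⟨by rw [congruence_apply, transpose_mul, transpose_mul, transpose_transpose, hM,
    Matrix.mul_assoc], ?_⟩
  rw [trace_congruence, h, smul_mul, one_mul, trace_smul, hM', smul_zero]

theorem map_congruence_tracelessSymmetric {K : Type*} [Field K] {A : Matrix n n K} {c : K}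
    (hc : c ≠ 0) (h : A * Aᵀ = c • 1) :
    (tracelessSymmetric : Submodule K (Matrix n n K)).map (congruence A) = tracelessSymmetric := by
  have h' : Aᵀ * A = c • 1 := by
    have : (c⁻¹ • Aᵀ) * A = 1 := mul_eq_one_comm.mp (by rw [mul_smul_comm, h, smul_smul,
      inv_mul_cancel₀ hc, one_smul])
    rw [smul_mul_assoc, inv_smul_eq_iff₀ hc] at this
    exact this
  refine le_antisymm (Submodule.map_le_iff_le_comap.mpr fun M hM =>
    congruence_mem_tracelessSymmetric h hM) fun M hM => ?_
  refine ⟨(c⁻¹ * c⁻¹) • congruence Aᵀ M, Submodule.smul_mem _ _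
    (congruence_mem_tracelessSymmetric (by rwa [transpose_transpose]) hM), ?_⟩
  have hAMA : Aᵀ * (A * M * Aᵀ) * A = (Aᵀ * A) * M * (Aᵀ * A) := by
    simp only [Matrix.mul_assoc]
  rw [map_smul, congruence_apply, congruence_apply, transpose_transpose, hAMA, h', smul_mul,
    one_mul, Matrix.mul_smul, mul_one, smul_smul, smul_smul,
    show c⁻¹ * c⁻¹ * c * c = 1 by field_simp, one_smul]

theorem tracelessSymmetric_fin_two_eq_span :
    (tracelessSymmetric : Submodule R (Matrix (Fin 2) (Fin 2) R)) =
      Submodule.span R {!![1, 0; 0, -1], !![0, 1; 1, 0]} := by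
  refine le_antisymm ?_ ?_
  · rintro M ⟨hM, hM'⟩
    refine Submodule.mem_span_pair.mpr ⟨M 0 0, M 0 1, ?_⟩
    rw [trace_fin_two, add_eq_zero_iff_eq_neg] at hM'
    have hM10 : M 1 0 = M 0 1 := congrFun (congrFun hM 0) 1
    ext i j
    fin_cases i <;> fin_cases j <;> simp [hM', hM10]
  · rw [Submodule.span_le, Set.insert_subset_iff, Set.singleton_subset_iff]
    refine ⟨⟨?_, ?_⟩, ?_, ?_⟩
    all_goals first
      | simp [trace_fin_two]
      | ext i j; fin_cases i <;> fin_cases j <;> rfl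

theorem map_congruence_le_tracelessSymmetric_iff {K : Type*} [Field K] [NeZero (2 : K)]
    {A : Matrix (Fin 2) (Fin 2) K} :
    (tracelessSymmetric : Submodule K _).map (congruence A) ≤ tracelessSymmetric ↔
      ∃ c : K, A * Aᵀ = c • 1 := by
  refine ⟨fun h => ?_, fun ⟨c, hc⟩ => Submodule.map_le_iff_le_comap.mpr fun M hM =>
    congruence_mem_tracelessSymmetric hc hM⟩
  nth_rw 1 [tracelessSymmetric_fin_two_eq_span] at h
  rw [Submodule.map_span_le] at h
  obtain ⟨-, h₁⟩ := h _ (Set.mem_insert _ _)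
  obtain ⟨-, h₂⟩ := h _ (Set.mem_insert_of_mem _ rfl)
  set G := A * Aᵀ with hG
  have hG_symm : G 1 0 = G 0 1 := by
    rw [← transpose_apply G, hG, transpose_mul, transpose_transpose]
  rw [trace_congruence, ← hG] at h₁ h₂
  simp only [trace_fin_two, mul_apply, of_apply, cons_val', cons_val_zero, cons_val_one,
    cons_val_fin_one, Fin.sum_univ_two, mul_one, mul_zero, mul_neg, add_zero, zero_add] at h₁ h₂
  have h01 : G 0 1 = 0 := by
    rw [hG_symm, ← two_mul] at h₂
    exact (mul_eq_zero.mp h₂).resolve_left two_ne_zero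
  rw [add_neg_eq_zero] at h₁
  refine ⟨G 0 0, ?_⟩
  ext i j
  fin_cases i <;> fin_cases j <;> simp [h01, hG_symm, h₁]

theorem exists_smul_orthogonal_of_mul_transpose_eq_smul_one {A : Matrix n n ℝ} {c : ℝ}
    (hA : A ≠ 0) (h : A * Aᵀ = c • 1) :
    ∃ (l : ℝ) (A₀ : Matrix n n ℝ), l ≠ 0 ∧ A₀ᵀ * A₀ = 1 ∧ A = l • A₀ := by
  obtain ⟨i, hi⟩ : ∃ i, A i ≠ 0 := Function.ne_iff.mp hA
  have hc : A i ⬝ᵥ A i = c := by simpa [mul_apply'] using congrFun (congrFun h i) i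
  have hc_pos : 0 < c :=
    hc ▸ lt_of_le_of_ne (Finset.sum_nonneg fun j _ => mul_self_nonneg (A i j))
      (Ne.symm (dotProduct_self_eq_zero.not.mpr hi))
  have hl : √c ≠ 0 := (Real.sqrt_pos.mpr hc_pos).ne'
  refine ⟨√c, (√c)⁻¹ • A, hl, mul_eq_one_comm.mp ?_,
    by rw [smul_smul, mul_inv_cancel₀ hl, one_smul]⟩
  rw [transpose_smul, smul_mul_smul_comm, h, smul_smul, ← mul_inv, Real.mul_self_sqrt hc_pos.le,
    inv_mul_cancel₀ hc_pos.ne', one_smul]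

end Matrix

theorem preserve_tracefree_plane_iff_general (A : Matrix (Fin 2) (Fin 2) ℝ) :
    Submodule.span ℝ
        ({Aᵀ * !![(1 : ℝ), 0; 0, -1] * A, Aᵀ * !![(0 : ℝ), 1; 1, 0] * A} :
          Set (Matrix (Fin 2) (Fin 2) ℝ)) =
      Submodule.span ℝ
        ({!![(1 : ℝ), 0; 0, -1], !![(0 : ℝ), 1; 1, 0]} :
          Set (Matrix (Fin 2) (Fin 2) ℝ)) ↔
    ∃ (l : ℝ) (A₀ : Matrix (Fin 2) (Fin 2) ℝ),
      l ≠ 0 ∧ A₀ᵀ * A₀ = 1 ∧ A = l • A₀ := by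
  rw [← congruence_apply, ← congruence_apply, ← Set.image_pair, Submodule.span_image,
    ← tracelessSymmetric_fin_two_eq_span]
  constructor
  · intro h
    obtain ⟨c, hc⟩ := map_congruence_le_tracelessSymmetric_iff.mp h.le
    refine exists_smul_orthogonal_of_mul_transpose_eq_smul_one ?_ hc
    rintro rfl
    have hS : (tracelessSymmetric : Submodule ℝ (Matrix (Fin 2) (Fin 2) ℝ)) = ⊥ := by
      rw [← h, eq_bot_iff, Submodule.map_le_iff_le_comap]
      exact fun M _ => by simp
    rw [tracelessSymmetric_fin_two_eq_span, Submodule.span_eq_bot] at hS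
    simpa using congrFun (congrFun (hS _ (Set.mem_insert _ _)) 0) 0
  · rintro ⟨l, A₀, hl, hA₀, rfl⟩
    refine map_congruence_tracelessSymmetric (mul_ne_zero hl hl) ?_
    rw [transpose_smul, smul_mul_smul_comm, mul_eq_one_comm.mp hA₀]

theorem preserve_tracefree_plane_iff (A : Matrix (Fin 2) (Fin 2) ℝ)
    (hA : IsUnit A.det) :
    Submodule.span ℝ
        ({Aᵀ * !![(1 : ℝ), 0; 0, -1] * A, Aᵀ * !![(0 : ℝ), 1; 1, 0] * A} :
          Set (Matrix (Fin 2) (Fin 2) ℝ)) =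
      Submodule.span ℝ
        ({!![(1 : ℝ), 0; 0, -1], !![(0 : ℝ), 1; 1, 0]} :
          Set (Matrix (Fin 2) (Fin 2) ℝ)) ↔
    ∃ (l : ℝ) (A₀ : Matrix (Fin 2) (Fin 2) ℝ),
      l ≠ 0 ∧ A₀ᵀ * A₀ = 1 ∧ A = l • A₀ :=
  preserve_tracefree_plane_iff_general A
end

section
/- For all (u,v) ∈ ℝ², the point x = (x₀,x₁,x₂,x₃,x₄) with x₀ = (1/2)(3cosh²(u)cosh²(v) - 1), x₁ = √3 sinh(u)cosh(u)cosh²(v), x₂ = √3 cosh(u)sinh(v)cosh(v), x₃ = (3/2)(cosh²(v)(cosh²(u) - 2) + 1), x₄ = 3 sinh(u)sinh(v)cosh(v) satisfies the three equations: x₁(x₀ - x₃ - 1) - x₂x₄ = 0, x₂(x₀ + x₃ - 1) - x₁x₄ = 0, and (4x₀ - 1)² - 12x₁² - 12x₂² - 9 = 0. -/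
theorem spacelike_plus_param_on_quadrics (u v : ℝ) :
    let x₀ : ℝ := (1/2) * (3 * Real.cosh u ^ 2 * Real.cosh v ^ 2 - 1)
    let x₁ : ℝ := Real.sqrt 3 * Real.sinh u * Real.cosh u * Real.cosh v ^ 2
    let x₂ : ℝ := Real.sqrt 3 * Real.cosh u * Real.sinh v * Real.cosh v
    let x₃ : ℝ := (3/2) * (Real.cosh v ^ 2 * (Real.cosh u ^ 2 - 2) + 1)
    let x₄ : ℝ := 3 * Real.sinh u * Real.sinh v * Real.cosh v
    x₁ * (x₀ - x₃ - 1) - x₂ * x₄ = 0 ∧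
    x₂ * (x₀ + x₃ - 1) - x₁ * x₄ = 0 ∧
    (4 * x₀ - 1) ^ 2 - 12 * x₁ ^ 2 - 12 * x₂ ^ 2 - 9 = 0 := by
  intro x₀ x₁ x₂ x₃ x₄
  have hu : Real.cosh u ^ 2 - Real.sinh u ^ 2 = 1 := Real.cosh_sq_sub_sinh_sq u
  have hv : Real.cosh v ^ 2 - Real.sinh v ^ 2 = 1 := Real.cosh_sq_sub_sinh_sq v
  have h3 : Real.sqrt 3 * Real.sqrt 3 = 3 := Real.mul_self_sqrt (by norm_num)
  simp only [x₀, x₁, x₂, x₃, x₄]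
  refine ⟨?_, ?_, ?_⟩
  · linear_combination (3 * Real.sqrt 3 * Real.sinh u * Real.cosh u * Real.cosh v ^ 2) * hv
  · linear_combination (3 * Real.sqrt 3 * Real.cosh u * Real.sinh v * Real.cosh v ^ 3) * hu
  · linear_combination
      (-12 * Real.sinh u ^ 2 * Real.cosh u ^ 2 * Real.cosh v ^ 4
        - 12 * Real.cosh u ^ 2 * Real.sinh v ^ 2 * Real.cosh v ^ 2) * h3
      + (36 * Real.cosh u ^ 2 * Real.cosh v ^ 4) * hu
      + (36 * Real.cosh u ^ 2 * Real.cosh v ^ 2) * hv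
end

section
/- For all (u,v) ∈ ℝ², the point x = (x₀,x₁,x₂,x₃,x₄) with x₀ = (1/2)(3cos²(u)cos²(v) - 1), x₁ = √3 sin(u)cos(u)cos²(v), x₂ = √3 cos(u)sin(v)cos(v), x₃ = (3/2)(cos²(v)(2 - cos²(u)) - 1), x₄ = 3 sin(u)sin(v)cos(v) satisfies: x₁(x₀ + x₃ - 1) + x₂x₄ = 0, x₂(x₀ - x₃ - 1) + x₁x₄ = 0, and (4x₀ - 1)² + 12x₁² + 12x₂² - 9 = 0. -/
theorem spacelike_minus_param_on_quadrics (u v : ℝ) :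
    let x₀ : ℝ := (1/2) * (3 * Real.cos u ^ 2 * Real.cos v ^ 2 - 1)
    let x₁ : ℝ := Real.sqrt 3 * Real.sin u * Real.cos u * Real.cos v ^ 2
    let x₂ : ℝ := Real.sqrt 3 * Real.cos u * Real.sin v * Real.cos v
    let x₃ : ℝ := (3/2) * (Real.cos v ^ 2 * (2 - Real.cos u ^ 2) - 1)
    let x₄ : ℝ := 3 * Real.sin u * Real.sin v * Real.cos v
    x₁ * (x₀ + x₃ - 1) + x₂ * x₄ = 0 ∧
    x₂ * (x₀ - x₃ - 1) + x₁ * x₄ = 0 ∧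
    (4 * x₀ - 1) ^ 2 + 12 * x₁ ^ 2 + 12 * x₂ ^ 2 - 9 = 0 := by
  have h3 : Real.sqrt 3 ^ 2 = 3 := Real.sq_sqrt (by norm_num)
  have hu := Real.sin_sq_add_cos_sq u
  have hv := Real.sin_sq_add_cos_sq v
  refine ⟨?_, ?_, ?_⟩
  · linear_combination (3 * Real.sqrt 3 * Real.sin u * Real.cos u * Real.cos v ^ 2) * hv
  · linear_combination (3 * Real.sqrt 3 * Real.cos u * Real.sin v * Real.cos v ^ 3) * hu
  · linear_combination (12 * (Real.sin u * Real.cos u * Real.cos v ^ 2) ^ 2 +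
      12 * (Real.cos u * Real.sin v * Real.cos v) ^ 2) * h3 +
      (36 * Real.cos u ^ 2 * Real.cos v ^ 2) * hv + (36 * Real.cos u ^ 2 * Real.cos v ^ 4) * hu
end

section
/- For all (u,v) ∈ ℝ², the point x = (x₀,x₁,x₂,x₃,x₄) with x₀ = (1/4)[3cos²(u)(cosh(2v)+1) - 2], x₁ = (√6/4)cos(u)[sin(u)(cosh(2v)+1) + sinh(2v)], x₂ = -(√6/4)cos(u)[sin(u)(cosh(2v)+1) - sinh(2v)], x₃ = -(3/8)[cos²(u)(cosh(2v)+1) - 2(cosh(2v) + sin(u)sinh(2v))], x₄ = -(3/8)[cos²(u)(cosh(2v)+1) - 2(cosh(2v) - sin(u)sinh(2v))] satisfies: 3x₂² - x₄(4x₀ + 2) = 0, 3x₁² - x₃(4x₀ + 2) = 0, and 2x₀² - x₀ - 3x₁x₂ - 1 = 0. -/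
theorem timelike_param_on_quadrics (u v : ℝ) :
    let x₀ : ℝ := (1/4) * (3 * Real.cos u ^ 2 * (Real.cosh (2*v) + 1) - 2)
    let x₁ : ℝ := (Real.sqrt 6 / 4) * Real.cos u *
      (Real.sin u * (Real.cosh (2*v) + 1) + Real.sinh (2*v))
    let x₂ : ℝ := -(Real.sqrt 6 / 4) * Real.cos u *
      (Real.sin u * (Real.cosh (2*v) + 1) - Real.sinh (2*v))
    let x₃ : ℝ := -(3/8) * (Real.cos u ^ 2 * (Real.cosh (2*v) + 1) -
      2 * (Real.cosh (2*v) + Real.sin u * Real.sinh (2*v)))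
    let x₄ : ℝ := -(3/8) * (Real.cos u ^ 2 * (Real.cosh (2*v) + 1) -
      2 * (Real.cosh (2*v) - Real.sin u * Real.sinh (2*v)))
    3 * x₂ ^ 2 - x₄ * (4 * x₀ + 2) = 0 ∧
    3 * x₁ ^ 2 - x₃ * (4 * x₀ + 2) = 0 ∧
    2 * x₀ ^ 2 - x₀ - 3 * x₁ * x₂ - 1 = 0 := by
  intro x₀ x₁ x₂ x₃ x₄
  have h6 : Real.sqrt 6 ^ 2 = 6 := Real.sq_sqrt (by norm_num)
  have hs : Real.sin u ^ 2 + Real.cos u ^ 2 = 1 := Real.sin_sq_add_cos_sq u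
  have hc : Real.cosh (2*v) ^ 2 - Real.sinh (2*v) ^ 2 = 1 :=
    Real.cosh_sq_sub_sinh_sq (2*v)
  set s := Real.sin u
  set c := Real.cos u
  set S := Real.sinh (2*v)
  set C := Real.cosh (2*v)
  set q := Real.sqrt 6
  simp only [x₀, x₁, x₂, x₃, x₄]
  refine ⟨?_, ?_, ?_⟩
  · linear_combination ((3/16)*c^2*(s*(C+1)-S)^2) * h6 +
      ((9/8)*c^2*(C+1)^2) * hs - ((9/8)*c^2) * hc
  · linear_combination ((3/16)*c^2*(s*(C+1)+S)^2) * h6 +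
      ((9/8)*c^2*(C+1)^2) * hs - ((9/8)*c^2) * hc
  · linear_combination ((3/16)*c^2*(s^2*(C+1)^2 - S^2)) * h6 +
      ((9/8)*c^2*(C+1)^2) * hs + ((9/8)*c^2) * hc
end

section
/- The map f̄ : ℝ² → ℝ⁵ given by f̄(u,v) = ((1/2)(3cosh²(u)cosh²(v) - 1), √3 sinh(u)cosh(u)cosh²(v), √3 cosh(u)sinh(v)cosh(v), (3/2)(cosh²(v)(cosh²(u) - 2) + 1), 3 sinh(u)sinh(v)cosh(v)) is an immersion: its partial derivatives f̄_u and f̄_v are linearly independent at every point (u,v) ∈ ℝ². -/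
/-!
The coordinates 1 and 2 already suffice: there the 2×2 minor of `(f̄_u, f̄_v)` is
`3 cosh u cosh² v ((cosh² u + sinh² u)(cosh² v + sinh² v) - 2 sinh² u sinh² v)`, and with
`cosh² = 1 + sinh²` the last factor is `1 + 2 sinh² u + 2 sinh² v + 2 sinh² u sinh² v > 0`.
-/

noncomputable def fbarSL (u v : ℝ) : Fin 5 → ℝ :=
  ![(1/2) * (3 * Real.cosh u ^ 2 * Real.cosh v ^ 2 - 1),
    Real.sqrt 3 * Real.sinh u * Real.cosh u * Real.cosh v ^ 2,
    Real.sqrt 3 * Real.cosh u * Real.sinh v * Real.cosh v,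
    (3/2) * (Real.cosh v ^ 2 * (Real.cosh u ^ 2 - 2) + 1),
    3 * Real.sinh u * Real.sinh v * Real.cosh v]

open Real

theorem linearIndependent_pair_of_minor_ne_zero {K ι : Type*} [Field K] {x y : ι → K} (i j : ι)
    (h : x i * y j - x j * y i ≠ 0) : LinearIndependent K ![x, y] := by
  rw [Fintype.linearIndependent_iff]
  intro g hg
  have hi := congrFun hg i
  have hj := congrFun hg j
  simp only [Fin.sum_univ_two, Matrix.cons_val_zero, Matrix.cons_val_one,
    Pi.add_apply, Pi.smul_apply, smul_eq_mul, Pi.zero_apply] at hi hj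
  have h0 : g 0 * (x i * y j - x j * y i) = 0 := by linear_combination y j * hi - y i * hj
  have h1 : g 1 * (x i * y j - x j * y i) = 0 := by linear_combination x i * hj - x j * hi
  intro k
  fin_cases k
  · exact (mul_eq_zero.mp h0).resolve_right h
  · exact (mul_eq_zero.mp h1).resolve_right h

theorem deriv_fbarSL_u_one (u v : ℝ) : deriv (fun s => fbarSL s v 1) u
    = √3 * (cosh u ^ 2 + sinh u ^ 2) * cosh v ^ 2 := by
  change deriv (fun s => √3 * sinh s * cosh s * cosh v ^ 2) u = _
  rw [((((hasDerivAt_sinh u).const_mul √3).fun_mul (hasDerivAt_cosh u)).mul_const _).deriv]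
  ring

theorem deriv_fbarSL_u_two (u v : ℝ) : deriv (fun s => fbarSL s v 2) u
    = √3 * sinh u * sinh v * cosh v := by
  change deriv (fun s => √3 * cosh s * sinh v * cosh v) u = _
  rw [((((hasDerivAt_cosh u).const_mul √3).mul_const _).mul_const _).deriv]

theorem deriv_fbarSL_v_one (u v : ℝ) : deriv (fun s => fbarSL u s 1) v
    = √3 * sinh u * cosh u * (2 * sinh v * cosh v) := by
  change deriv (fun s => √3 * sinh u * cosh u * cosh s ^ 2) v = _
  rw [(((hasDerivAt_cosh v).fun_pow 2).const_mul _).deriv]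
  ring

theorem deriv_fbarSL_v_two (u v : ℝ) : deriv (fun s => fbarSL u s 2) v
    = √3 * cosh u * (cosh v ^ 2 + sinh v ^ 2) := by
  change deriv (fun s => √3 * cosh u * sinh s * cosh s) v = _
  rw [(((hasDerivAt_sinh v).const_mul _).fun_mul (hasDerivAt_cosh v)).deriv]
  ring

theorem cosh_sq_add_sinh_sq_mul_sub_pos (u v : ℝ) :
    0 < (cosh u ^ 2 + sinh u ^ 2) * (cosh v ^ 2 + sinh v ^ 2) - 2 * sinh u ^ 2 * sinh v ^ 2 := by
  rw [cosh_sq' u, cosh_sq' v]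
  nlinarith [sq_nonneg (sinh u), sq_nonneg (sinh v),
    mul_nonneg (sq_nonneg (sinh u)) (sq_nonneg (sinh v))]

theorem spacelike_plus_param_immersion (u v : ℝ) :
    LinearIndependent ℝ
      ![(fun i => deriv (fun s => fbarSL s v i) u),
        (fun i => deriv (fun s => fbarSL u s i) v)] := by
  refine linearIndependent_pair_of_minor_ne_zero 1 2 ?_
  rw [deriv_fbarSL_u_one, deriv_fbarSL_u_two, deriv_fbarSL_v_one, deriv_fbarSL_v_two]
  have minor :
      √3 * (cosh u ^ 2 + sinh u ^ 2) * cosh v ^ 2 * (√3 * cosh u * (cosh v ^ 2 + sinh v ^ 2))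
      - √3 * sinh u * sinh v * cosh v * (√3 * sinh u * cosh u * (2 * sinh v * cosh v))
      = 3 * cosh u * cosh v ^ 2 *
        ((cosh u ^ 2 + sinh u ^ 2) * (cosh v ^ 2 + sinh v ^ 2) - 2 * sinh u ^ 2 * sinh v ^ 2) := by
    linear_combination cosh u * cosh v ^ 2 *
      ((cosh u ^ 2 + sinh u ^ 2) * (cosh v ^ 2 + sinh v ^ 2) - 2 * sinh u ^ 2 * sinh v ^ 2) *
      sq_sqrt (show (0:ℝ) ≤ 3 by norm_num)
  rw [minor]
  exact (mul_pos (by positivity) (cosh_sq_add_sinh_sq_mul_sub_pos u v)).ne'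
end

section
/- Let M₀, M₁, M₂ be the explicit 5×5 matrices of the space-like ε = +1 homogeneous example (satisfying [M₀,M₁] = -M₂, [M₁,M₂] = (1/3)M₀, [M₂,M₀] = -M₁). Then the Lie algebra g = span(M₀, M₁, M₂) acts irreducibly on ℝ⁵: the only subspaces of ℝ⁵ invariant under M₀, M₁, and M₂ simultaneously are {0} and ℝ⁵. -/
theorem spacelike_plus_irreducible
    (M₀ M₁ M₂ : Matrix (Fin 5) (Fin 5) ℝ)
    (h₀ : M₀ = !![0,0,0,0,0; 0,0,1,0,0; 0,-1,0,0,0; 0,0,0,0,2; 0,0,0,-2,0])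
    (h₁ : M₁ = !![0,1,0,0,0; 1,0,0,1/3,0; 0,0,0,0,1/3; 0,1,0,0,0; 0,0,1,0,0])
    (h₂ : M₂ = !![0,0,1,0,0; 0,0,0,0,1/3; 1,0,0,-1/3,0; 0,0,-1,0,0; 0,1,0,0,0])
    (V : Submodule ℝ (Fin 5 → ℝ))
    (hV₀ : ∀ x ∈ V, M₀.mulVec x ∈ V)
    (hV₁ : ∀ x ∈ V, M₁.mulVec x ∈ V)
    (hV₂ : ∀ x ∈ V, M₂.mulVec x ∈ V) :
    V = ⊥ ∨ V = ⊤ := by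
  rcases eq_or_ne V ⊥ with hb | hb
  · exact Or.inl hb
  right
  obtain ⟨x, hx, hxne⟩ := (Submodule.ne_bot_iff V).mp hb
  -- key projection lemma: component-0 part of any v ∈ V is in V
  have key : ∀ v ∈ V, (![v 0, 0, 0, 0, 0] : Fin 5 → ℝ) ∈ V := by
    intro v hv
    have h2 := hV₀ _ (hV₀ v hv)
    have h4 := hV₀ _ (hV₀ _ h2)
    have hm : (![v 0, 0, 0, 0, 0] : Fin 5 → ℝ)
        = v + (5/4 : ℝ) • (M₀.mulVec (M₀.mulVec v))
          + (1/4 : ℝ) • (M₀.mulVec (M₀.mulVec (M₀.mulVec (M₀.mulVec v)))) := by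
      subst h₀
      funext j
      fin_cases j <;>
        simp [Matrix.mulVec, dotProduct, Fin.sum_univ_five] <;> ring
    rw [hm]
    exact V.add_mem (V.add_mem hv (V.smul_mem _ h2)) (V.smul_mem _ h4)
  have scale : ∀ c : ℝ, c ≠ 0 → (![c, 0, 0, 0, 0] : Fin 5 → ℝ) ∈ V →
      (![1, 0, 0, 0, 0] : Fin 5 → ℝ) ∈ V := by
    intro c hc h
    have : (![1, 0, 0, 0, 0] : Fin 5 → ℝ) = c⁻¹ • ![c, 0, 0, 0, 0] := by
      funext j
      fin_cases j <;> simp [inv_mul_cancel₀ hc]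
    rw [this]
    exact V.smul_mem _ h
  have he0 : (![1, 0, 0, 0, 0] : Fin 5 → ℝ) ∈ V := by
    obtain ⟨j, hj⟩ := Function.ne_iff.mp hxne
    simp only [Pi.zero_apply] at hj
    fin_cases j
    · -- x 0 ≠ 0
      exact scale _ hj (key x hx)
    · -- x 1 ≠ 0 : use M₁ x, whose 0-component is x 1
      have hv := hV₁ x hx
      have hc : (M₁.mulVec x) 0 = x 1 := by
        subst h₁; simp [Matrix.mulVec, dotProduct, Fin.sum_univ_five]
      have := key _ hv
      rw [hc] at this
      exact scale _ hj this
    · -- x 2 ≠ 0 : use M₂ x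
      have hv := hV₂ x hx
      have hc : (M₂.mulVec x) 0 = x 2 := by
        subst h₂; simp [Matrix.mulVec, dotProduct, Fin.sum_univ_five]
      have := key _ hv
      rw [hc] at this
      exact scale _ hj this
    · -- x 3 ≠ 0 : use M₁ M₁ x - M₂ M₂ x, 0-component is (2/3) x 3
      have hv : M₁.mulVec (M₁.mulVec x) - M₂.mulVec (M₂.mulVec x) ∈ V :=
        V.sub_mem (hV₁ _ (hV₁ x hx)) (hV₂ _ (hV₂ x hx))
      have hc : (M₁.mulVec (M₁.mulVec x) - M₂.mulVec (M₂.mulVec x)) 0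
          = (2/3) * x 3 := by
        subst h₁ h₂
        simp [Matrix.mulVec, dotProduct, Fin.sum_univ_five]
        ring
      have := key _ hv
      rw [hc] at this
      exact scale _ (mul_ne_zero (by norm_num) hj) this
    · -- x 4 ≠ 0 : use M₁ M₂ x, 0-component is x 4 / 3
      have hv := hV₁ _ (hV₂ x hx)
      have hc : (M₁.mulVec (M₂.mulVec x)) 0 = x 4 / 3 := by
        subst h₁ h₂
        simp [Matrix.mulVec, dotProduct, Fin.sum_univ_five]
        ring
      have := key _ hv
      rw [hc] at this
      exact scale _ (div_ne_zero hj (by norm_num)) this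
  -- generate the rest of the basis
  have he1 : (![0, 1, 0, 0, 0] : Fin 5 → ℝ) ∈ V := by
    have h := hV₁ _ he0
    have hc : M₁.mulVec ![1, 0, 0, 0, 0] = ![0, 1, 0, 0, 0] := by
      subst h₁
      funext j
      fin_cases j <;> simp [Matrix.mulVec, dotProduct, Fin.sum_univ_five]
    rwa [hc] at h
  have he2 : (![0, 0, 1, 0, 0] : Fin 5 → ℝ) ∈ V := by
    have h := V.smul_mem (-1 : ℝ) (hV₀ _ he1)
    have hc : (-1 : ℝ) • M₀.mulVec ![0, 1, 0, 0, 0] = ![0, 0, 1, 0, 0] := by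
      subst h₀
      funext j
      fin_cases j <;> simp [Matrix.mulVec, dotProduct, Fin.sum_univ_five]
    rwa [hc] at h
  have he4 : (![0, 0, 0, 0, 1] : Fin 5 → ℝ) ∈ V := by
    have h := hV₁ _ he2
    have hc : M₁.mulVec ![0, 0, 1, 0, 0] = ![0, 0, 0, 0, 1] := by
      subst h₁
      funext j
      fin_cases j <;> simp [Matrix.mulVec, dotProduct, Fin.sum_univ_five]
    rwa [hc] at h
  have he3 : (![0, 0, 0, 1, 0] : Fin 5 → ℝ) ∈ V := by
    have h := V.smul_mem ((2:ℝ)⁻¹) (hV₀ _ he4)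
    have hc : ((2:ℝ)⁻¹) • M₀.mulVec ![0, 0, 0, 0, 1] = ![0, 0, 0, 1, 0] := by
      subst h₀
      funext j
      fin_cases j <;> simp [Matrix.mulVec, dotProduct, Fin.sum_univ_five]
    rwa [hc] at h
  rw [Submodule.eq_top_iff']
  intro v
  have hdecomp : v = v 0 • ![1,0,0,0,0] + v 1 • ![0,1,0,0,0] + v 2 • ![0,0,1,0,0]
      + v 3 • ![0,0,0,1,0] + v 4 • ![0,0,0,0,1] := by
    funext j
    fin_cases j <;> simp
  rw [hdecomp]
  exact V.add_mem (V.add_mem (V.add_mem (V.add_mem (V.smul_mem _ he0)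
    (V.smul_mem _ he1)) (V.smul_mem _ he2)) (V.smul_mem _ he3)) (V.smul_mem _ he4)
end
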